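/- arXiv:2204.11309 — 2 statements merged into one kernel-verified Lean document; each statement's English description precedes it below -/
import Mathlib

section
/- Let μ be a nonatomic Borel probability measure on ℝ with cumulative distribution function F(x) = μ((−∞, x]), and for k ∈ ℤ define e_k : ℝ → ℝ by e_k(x) = √2·sin(2πkx) for k ≥ 1, e_0(x) = 1, and e_k(x) = √2·cos(2π|k|x) for k ≤ −1. Then for all j, k ∈ ℤ: ∫_ℝ e_j(F(x))·e_k(F(x)) dμ(x) = 1 if j = k and = 0 if j ≠ k. -/
/-!
The CDF `F` of a nonatomic probability measure `μ` is continuous, so each sublevel set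
`{F ≤ y}` with `0 ≤ y < 1` is a closed half-line `Iic s` with `F s = y`, of measure `y`.
Hence `F` pushes `μ` forward to Lebesgue measure on `[0,1]`, and the integral reduces to
the orthonormality of the trigonometric system on `[0,1]`, which follows from the
product-to-sum formulas.
-/

open Real MeasureTheory

/-- The standard real Fourier basis on `[0,1]`:
`e_k(x) = √2·sin(2πkx)` for `k ≥ 1`, `e_0 = 1`, `e_k(x) = √2·cos(2π|k|x)` for `k ≤ -1`. -/
noncomputable def fourierBasisFun (k : ℤ) (x : ℝ) : ℝ :=
  if k = 0 then 1
  else if 0 < k then Real.sqrt 2 * Real.sin (2 * π * (k : ℝ) * x)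
  else Real.sqrt 2 * Real.cos (2 * π * ((|k| : ℤ) : ℝ) * x)

open Set Filter Topology intervalIntegral ProbabilityTheory

lemma Monotone.exists_preimage_Iic_eq_Iic {F : ℝ → ℝ} (hmono : Monotone F)
    (hcont : Continuous F) {y : ℝ} (hne : (F ⁻¹' Iic y).Nonempty)
    (hbdd : BddAbove (F ⁻¹' Iic y)) :
    ∃ s, F s = y ∧ F ⁻¹' Iic y = Iic s := by
  set s := sSup (F ⁻¹' Iic y)
  have hs : F s ≤ y := (isClosed_Iic.preimage hcont).csSup_mem hne hbdd
  have hlt : ∀ t, s < t → y < F t := fun t hst =>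
    not_le.1 fun h => (le_csSup hbdd h).not_gt hst
  refine ⟨s, le_antisymm hs ?_, Subset.antisymm (fun x hx => le_csSup hbdd hx)
    fun x hx => (hmono hx).trans hs⟩
  exact _root_.ge_of_tendsto (hcont.continuousWithinAt (s := Ioi s))
    (eventually_nhdsWithin_of_forall fun t ht => (hlt t ht).le)

lemma StieltjesFunction.continuous_of_measure_singleton (f : StieltjesFunction ℝ)
    (h : ∀ x, f.measure {x} = 0) : Continuous f := by
  refine continuous_iff_continuousAt.2 fun x => ?_
  rw [f.mono.continuousAt_iff_leftLim_eq_rightLim, f.rightLim_eq]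
  have hjump : f x - Function.leftLim f x ≤ 0 := by
    rw [← ENNReal.ofReal_eq_zero, ← f.measure_singleton]
    exact h x
  exact le_antisymm (f.mono.leftLim_le le_rfl) (by linarith)

namespace ProbabilityTheory

variable (μ : Measure ℝ) [IsProbabilityMeasure μ] [NullSingletonClass μ]

lemma continuous_cdf : Continuous (cdf μ) :=
  (cdf μ).continuous_of_measure_singleton fun x => by rw [measure_cdf]; exact measure_singleton x

lemma measure_cdf_preimage_Iic (y : ℝ) :
    μ (cdf μ ⁻¹' Iic y) = ENNReal.ofReal (min 1 y) := by
  rcases lt_or_ge y 0 with hy0 | hy0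
  · have : cdf μ ⁻¹' Iic y = ∅ :=
      eq_empty_of_forall_notMem fun x hx => (hy0.trans_le (cdf_nonneg μ x)).not_ge hx
    rw [this, measure_empty, eq_comm, ENNReal.ofReal_eq_zero]
    exact (min_le_right _ _).trans hy0.le
  rcases le_or_gt 1 y with hy1 | hy1
  · have : cdf μ ⁻¹' Iic y = univ := eq_univ_of_forall fun x => (cdf_le_one μ x).trans hy1
    rw [this, measure_univ, min_eq_left hy1, ENNReal.ofReal_one]
  rw [min_eq_right hy1.le]
  rcases (cdf μ ⁻¹' Iic y).eq_empty_or_nonempty with hempty | hne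
  · have : y ≤ 0 := ge_of_tendsto (tendsto_cdf_atBot μ) <| Eventually.of_forall fun x =>
      (not_le.1 (eq_empty_iff_forall_notMem.1 hempty x)).le
    rw [hempty, measure_empty, ENNReal.ofReal_of_nonpos this]
  have hbdd : BddAbove (cdf μ ⁻¹' Iic y) := by
    obtain ⟨b, hb⟩ := ((tendsto_cdf_atTop μ).eventually_const_lt hy1).exists_forall_of_atTop
    exact ⟨b, fun x hx => not_lt.1 fun hbx => (hb x hbx.le).not_ge hx⟩
  obtain ⟨s, rfl, hIic⟩ :=
    (monotone_cdf μ).exists_preimage_Iic_eq_Iic (continuous_cdf μ) hne hbdd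
  rw [hIic, ofReal_cdf]

lemma map_cdf : μ.map (cdf μ) = volume.restrict (Ioc 0 1) := by
  have hmeas : Measurable (cdf μ) := (monotone_cdf μ).measurable
  refine Measure.ext_of_Iic _ _ fun y => ?_
  rw [Measure.map_apply hmeas measurableSet_Iic, measure_cdf_preimage_Iic,
    Measure.restrict_apply measurableSet_Iic, inter_comm, Ioc_inter_Iic, Real.volume_Ioc, sub_zero]

end ProbabilityTheory

lemma integral_cos_two_pi_int_mul (n : ℤ) :
    ∫ x in (0:ℝ)..1, cos (2 * π * n * x) = if n = 0 then 1 else 0 := by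
  rcases eq_or_ne n 0 with rfl | hn
  · simp
  have hc : 2 * π * n ≠ 0 := by positivity
  rw [integral_comp_mul_left (fun x => cos x) hc, integral_cos, if_neg hn,
    show 2 * π * n * 1 = (2 * n : ℤ) * π by push_cast; ring, sin_int_mul_pi]
  simp

lemma integral_sin_two_pi_int_mul (n : ℤ) :
    ∫ x in (0:ℝ)..1, sin (2 * π * n * x) = 0 := by
  rcases eq_or_ne n 0 with rfl | hn
  · simp
  have hc : 2 * π * n ≠ 0 := by positivity
  rw [integral_comp_mul_left (fun x => sin x) hc, integral_sin,
    show 2 * π * n * 1 = n * (2 * π) by ring, cos_int_mul_two_pi]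
  simp

lemma integral_sin_mul_sin_two_pi_int_mul (a b : ℤ) :
    ∫ x in (0:ℝ)..1, sin (2 * π * a * x) * sin (2 * π * b * x) =
      ((if a = b then 1 else 0) - (if a + b = 0 then 1 else 0)) / 2 := by
  have h (x : ℝ) : sin (2 * π * a * x) * sin (2 * π * b * x) =
      (cos (2 * π * (a - b : ℤ) * x) - cos (2 * π * (a + b : ℤ) * x)) / 2 := by
    simp only [Int.cast_sub, Int.cast_add, mul_sub, mul_add, sub_mul, add_mul, cos_sub,
      cos_add]
    ring
  simp only [h]
  rw [intervalIntegral.integral_div, integral_sub (Continuous.intervalIntegrable (by fun_prop) _ _)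
    (Continuous.intervalIntegrable (by fun_prop) _ _), integral_cos_two_pi_int_mul,
    integral_cos_two_pi_int_mul]
  simp only [sub_eq_zero]

lemma integral_cos_mul_cos_two_pi_int_mul (a b : ℤ) :
    ∫ x in (0:ℝ)..1, cos (2 * π * a * x) * cos (2 * π * b * x) =
      ((if a = b then 1 else 0) + (if a + b = 0 then 1 else 0)) / 2 := by
  have h (x : ℝ) : cos (2 * π * a * x) * cos (2 * π * b * x) =
      (cos (2 * π * (a - b : ℤ) * x) + cos (2 * π * (a + b : ℤ) * x)) / 2 := by
    simp only [Int.cast_sub, Int.cast_add, mul_sub, mul_add, sub_mul, add_mul, cos_sub,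
      cos_add]
    ring
  simp only [h]
  rw [intervalIntegral.integral_div, integral_add (Continuous.intervalIntegrable (by fun_prop) _ _)
    (Continuous.intervalIntegrable (by fun_prop) _ _), integral_cos_two_pi_int_mul,
    integral_cos_two_pi_int_mul]
  simp only [sub_eq_zero]

lemma integral_sin_mul_cos_two_pi_int_mul (a b : ℤ) :
    ∫ x in (0:ℝ)..1, sin (2 * π * a * x) * cos (2 * π * b * x) = 0 := by
  have h (x : ℝ) : sin (2 * π * a * x) * cos (2 * π * b * x) =
      (sin (2 * π * (a + b : ℤ) * x) + sin (2 * π * (a - b : ℤ) * x)) / 2 := by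
    simp only [Int.cast_sub, Int.cast_add, mul_sub, mul_add, sub_mul, add_mul, sin_sub,
      sin_add]
    ring
  simp only [h]
  rw [intervalIntegral.integral_div, integral_add (Continuous.intervalIntegrable (by fun_prop) _ _)
    (Continuous.intervalIntegrable (by fun_prop) _ _), integral_sin_two_pi_int_mul,
    integral_sin_two_pi_int_mul]
  norm_num

lemma fourierBasisFun_zero (x : ℝ) : fourierBasisFun 0 x = 1 := by
  simp [fourierBasisFun]

lemma fourierBasisFun_of_pos {n : ℤ} (hn : 0 < n) (x : ℝ) :
    fourierBasisFun n x = √2 * sin (2 * π * n * x) := by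
  simp [fourierBasisFun, hn, hn.ne']

lemma fourierBasisFun_neg_of_pos {n : ℤ} (hn : 0 < n) (x : ℝ) :
    fourierBasisFun (-n) x = √2 * cos (2 * π * n * x) := by
  simp [fourierBasisFun, hn.ne', not_lt.2 hn.le, abs_of_pos hn]

lemma continuous_fourierBasisFun (k : ℤ) : Continuous (fourierBasisFun k) := by
  unfold fourierBasisFun
  split_ifs <;> fun_prop

lemma Int.exists_pos_and_eq_or_eq_neg {k : ℤ} (hk : k ≠ 0) : ∃ n, 0 < n ∧ (n = k ∨ -n = k) :=
  ⟨|k|, abs_pos.2 hk, by rcases abs_choice k with h | h <;> omega⟩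

lemma integral_fourierBasisFun (k : ℤ) :
    ∫ x in (0:ℝ)..1, fourierBasisFun k x = if k = 0 then 1 else 0 := by
  rcases eq_or_ne k 0 with rfl | hk
  · simp [fourierBasisFun_zero]
  obtain ⟨n, hn, rfl | rfl⟩ := Int.exists_pos_and_eq_or_eq_neg hk
  · simp only [fourierBasisFun_of_pos hn, intervalIntegral.integral_const_mul,
      integral_sin_two_pi_int_mul, mul_zero, if_neg hn.ne']
  · simp only [fourierBasisFun_neg_of_pos hn, intervalIntegral.integral_const_mul,
      integral_cos_two_pi_int_mul, if_neg hn.ne', neg_eq_zero, mul_zero]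

lemma integral_fourierBasisFun_mul (j k : ℤ) :
    ∫ x in (0:ℝ)..1, fourierBasisFun j x * fourierBasisFun k x = if j = k then 1 else 0 := by
  rcases eq_or_ne j 0 with rfl | hj
  · simp only [fourierBasisFun_zero, one_mul, integral_fourierBasisFun, eq_comm]
  rcases eq_or_ne k 0 with rfl | hk
  · simp only [fourierBasisFun_zero, mul_one, integral_fourierBasisFun]
  have hsqrt (s t : ℝ) : √2 * s * (√2 * t) = 2 * (s * t) := by
    rw [mul_mul_mul_comm, mul_self_sqrt zero_le_two]
  obtain ⟨a, ha, rfl | rfl⟩ := Int.exists_pos_and_eq_or_eq_neg hj <;>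
  obtain ⟨b, hb, rfl | rfl⟩ := Int.exists_pos_and_eq_or_eq_neg hk
  · simp only [fourierBasisFun_of_pos, ha, hb, hsqrt, intervalIntegral.integral_const_mul,
      integral_sin_mul_sin_two_pi_int_mul, if_neg (by omega : a + b ≠ 0)]
    split_ifs <;> norm_num
  · simp only [fourierBasisFun_of_pos ha, fourierBasisFun_neg_of_pos hb, hsqrt,
      intervalIntegral.integral_const_mul, integral_sin_mul_cos_two_pi_int_mul,
      if_neg (by omega : a ≠ -b), mul_zero]
  · simp only [fourierBasisFun_neg_of_pos ha, fourierBasisFun_of_pos hb, hsqrt, mul_comm (cos _),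
      intervalIntegral.integral_const_mul, integral_sin_mul_cos_two_pi_int_mul,
      if_neg (by omega : -a ≠ b), mul_zero]
  · simp only [fourierBasisFun_neg_of_pos, ha, hb, hsqrt, intervalIntegral.integral_const_mul,
      integral_cos_mul_cos_two_pi_int_mul, neg_inj, if_neg (by omega : a + b ≠ 0)]
    split_ifs <;> norm_num

/-- Orthonormality of the moving frame `{e_k ∘ F}` in `L²(μ)` for a nonatomic Borel
probability measure `μ` on `ℝ` with CDF `F`. -/
theorem stmt_13 (μ : Measure ℝ) [IsProbabilityMeasure μ] [NullSingletonClass μ]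
    (F : ℝ → ℝ) (hF : ∀ x, F x = (μ (Set.Iic x)).toReal) (j k : ℤ) :
    ∫ x, fourierBasisFun j (F x) * fourierBasisFun k (F x) ∂μ =
      if j = k then 1 else 0 := by
  obtain rfl : F = cdf μ := funext fun x => by rw [hF, cdf_eq_real, measureReal_def]
  have hcont : Continuous fun y => fourierBasisFun j y * fourierBasisFun k y :=
    (continuous_fourierBasisFun j).mul (continuous_fourierBasisFun k)
  rw [← integral_map (monotone_cdf μ).measurable.aemeasurable hcont.aestronglyMeasurable,
    map_cdf, ← integral_of_le zero_le_one, integral_fourierBasisFun_mul]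
end

section
/- Let g : ℝ → ℝ be differentiable, 1-periodic, with |g'(x)| ≤ C for all x, and let x_1, …, x_N be real numbers such that 2(x_i − x_j) ∉ ℤ for all i ≠ j. Then |Σ_{1≤i<j≤N} (g(x_i) − g(x_j))·cot(π(x_i − x_j))| ≤ C·N·(N−1)/(2π), where cot t = cos t / sin t. -/
/-!
Every summand is at most `C / π` in absolute value. Shifting `x_i` by an integer changes neither
`g (x_i)` (1-periodicity) nor `cot (π (x_i - x_j))` (π-periodicity of `cot`), so we may assume
`|x_i - x_j| ≤ 1/2`. Then the mean value theorem gives `|g (x_i) - g (x_j)| ≤ C |x_i - x_j|`, and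
`|t cot t| ≤ 1` for `|t| ≤ π/2` because `t ≤ tan t` on `[0, π/2)`. Summing over the `N (N - 1) / 2`
pairs gives the bound.
-/

open Real Finset

-- At `t = 0` and `|t| = π / 2` the left side is `0`, since `tan (π / 2) = 0` and `0⁻¹ = 0`.
theorem abs_mul_inv_tan_le_one {t : ℝ} (ht : |t| ≤ π / 2) : |t * (tan t)⁻¹| ≤ 1 := by
  have key : ∀ u, 0 ≤ u → u ≤ π / 2 → |u * (tan u)⁻¹| ≤ 1 := by
    intro u hu0 hu
    rcases hu.lt_or_eq with hlt | rfl
    · have htan : u ≤ tan u := le_tan hu0 hlt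
      have hpos : 0 ≤ tan u := hu0.trans htan
      rw [abs_of_nonneg (by positivity)]
      exact mul_inv_le_one_of_le₀ htan hpos
    · simp [tan_pi_div_two]
  rcases le_total 0 t with h | h
  · exact key t h (by rwa [abs_of_nonneg h] at ht)
  · simpa [tan_neg] using key (-t) (by linarith) (by rwa [abs_of_nonpos h] at ht)

theorem abs_sub_mul_inv_tan_le {g : ℝ → ℝ} {C : ℝ} (hper : Function.Periodic g 1)
    (hlip : ∀ a b, |g a - g b| ≤ C * |a - b|) (a b : ℝ) :
    |(g a - g b) * (tan (π * (a - b)))⁻¹| ≤ C / π := by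
  have hC : 0 ≤ C := nonneg_of_mul_nonneg_left ((abs_nonneg _).trans (hlip 1 0)) (by norm_num)
  set n := round (a - b)
  set a' := a - n * 1
  have hga : g a' = g a := hper.sub_int_mul_eq n
  have htan : tan (π * (a' - b)) = tan (π * (a - b)) := by
    rw [show π * (a' - b) = π * (a - b) - n * π by ring, tan_periodic.sub_int_mul_eq]
  have hs : |π * (a' - b)| ≤ π / 2 := by
    rw [abs_mul, abs_of_pos pi_pos, show a' - b = a - b - n by ring]
    nlinarith [abs_sub_round (a - b), pi_pos]
  calc |(g a - g b) * (tan (π * (a - b)))⁻¹|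
      = |g a' - g b| * |(tan (π * (a' - b)))⁻¹| := by rw [abs_mul, hga, htan]
    _ ≤ C * |a' - b| * |(tan (π * (a' - b)))⁻¹| := by gcongr; exact hlip a' b
    _ = C / π * |π * (a' - b) * (tan (π * (a' - b)))⁻¹| := by
        rw [abs_mul, abs_mul, abs_of_pos pi_pos]; field_simp
    _ ≤ C / π := mul_le_of_le_one_right (by positivity) (abs_mul_inv_tan_le_one hs)

theorem Fin.sum_card_Ioi (N : ℕ) : (∑ i : Fin N, #(Ioi i)) * 2 = N * (N - 1) := by
  simp only [Fin.card_Ioi]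
  rw [Fin.sum_univ_eq_sum_range (fun i => N - 1 - i), sum_range_reflect (fun i => i),
    sum_range_id_mul_two]

theorem stmt_18_general (g : ℝ → ℝ) (hg : Differentiable ℝ g) (hper : ∀ x, g (x + 1) = g x)
    (C : ℝ) (hC : ∀ x, |deriv g x| ≤ C) (N : ℕ) (x : Fin N → ℝ) :
    |∑ i : Fin N, ∑ j ∈ Finset.univ.filter (fun j => i < j),
        (g (x i) - g (x j)) *
          (Real.cos (π * (x i - x j)) / Real.sin (π * (x i - x j)))| ≤
      C * (N : ℝ) * ((N : ℝ) - 1) / (2 * π) := by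
  have hlip : ∀ a b, |g a - g b| ≤ C * |a - b| := fun a b =>
    Convex.norm_image_sub_le_of_norm_deriv_le (fun y _ => hg y) (fun y _ => hC y)
      convex_univ (Set.mem_univ b) (Set.mem_univ a)
  have hpairs : (∑ i : Fin N, (#(Ioi i) : ℝ)) = N * (N - 1) / 2 := by
    rcases N with _ | N
    · simp
    · have := congrArg (Nat.cast (R := ℝ)) (Fin.sum_card_Ioi (N + 1))
      push_cast at this ⊢
      linarith
  have hcot (t : ℝ) : cos t / sin t = (tan t)⁻¹ := by rw [tan_eq_sin_div_cos, inv_div]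
  simp only [filter_lt_eq_Ioi, hcot]
  calc _ ≤ ∑ i : Fin N, ∑ j ∈ Ioi i, C / π :=
        (abs_sum_le_sum_abs _ _).trans <| sum_le_sum fun i _ =>
          (abs_sum_le_sum_abs _ _).trans <| sum_le_sum fun j _ =>
            abs_sub_mul_inv_tan_le hper hlip (x i) (x j)
    _ = (∑ i : Fin N, (#(Ioi i) : ℝ)) * (C / π) := by simp only [sum_const, nsmul_eq_mul, sum_mul]
    _ = C * N * (N - 1) / (2 * π) := by rw [hpairs]; field_simp

/-- Drift-term bound: for `g` differentiable, 1-periodic, `|g'| ≤ C`, and reals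
`x_1,…,x_N` with `2(x_i − x_j) ∉ ℤ` for `i ≠ j`,
`|Σ_{i<j} (g(x_i) − g(x_j))·cot(π(x_i − x_j))| ≤ C·N·(N−1)/(2π)`,
where `cot t = cos t / sin t`. -/
theorem stmt_18 (g : ℝ → ℝ) (hg : Differentiable ℝ g) (hper : ∀ x, g (x + 1) = g x)
    (C : ℝ) (hC : ∀ x, |deriv g x| ≤ C) (N : ℕ) (x : Fin N → ℝ)
    (hx : ∀ i j, i ≠ j → ∀ n : ℤ, (n : ℝ) ≠ 2 * (x i - x j)) :
    |∑ i : Fin N, ∑ j ∈ Finset.univ.filter (fun j => i < j),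
        (g (x i) - g (x j)) *
          (Real.cos (π * (x i - x j)) / Real.sin (π * (x i - x j)))| ≤
      C * (N : ℝ) * ((N : ℝ) - 1) / (2 * π) :=
  stmt_18_general g hg hper C hC N x
end
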